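/- arXiv:1905.08127 — 2 statements merged into one kernel-verified Lean document; each statement's English description precedes it below -/
import Mathlib

section
/- Let V be a finite nonempty type, w : V → V → ℕ∞, q : ℕ with q ≥ 1, and let w_q be the augmented graph on V ⊕ Bool. Then rad_w ≥ 2q if and only if every vertex p : V ⊕ Bool satisfies ecc_{w_q}(p) = 2q (in particular, in that case the radius and the diameter of the augmented graph are equal). -/
/-- Weight of a walk starting at `u` and visiting the vertices of `p` in order. -/
def walkWeight {V : Type*} (w : V → V → ℕ∞) : V → List V → ℕ∞
  | _, [] => 0
  | u, x :: xs => w u x + walkWeight w x xs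

/-- Shortest-path distance: infimum of weights of walks from `u` to `v`. -/
noncomputable def gdist {V : Type*} (w : V → V → ℕ∞) (u v : V) : ℕ∞ :=
  ⨅ (p : List V) (_ : (u :: p).getLast (List.cons_ne_nil u p) = v), walkWeight w u p

/-- Eccentricity of a vertex. -/
noncomputable def ecc {V : Type*} (w : V → V → ℕ∞) (v : V) : ℕ∞ :=
  ⨆ u, gdist w v u

/-- Radius. -/
noncomputable def rad {V : Type*} (w : V → V → ℕ∞) : ℕ∞ :=
  ⨅ v, ecc w v

/-- Diameter. -/
noncomputable def diam {V : Type*} (w : V → V → ℕ∞) : ℕ∞ :=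
  ⨆ v, ecc w v

/-- Augmented graph on `V ⊕ Bool`: two extra vertices `x = inr false`, `y = inr true`
connected to every original vertex (in both directions) by edges of weight `q`. -/
def aug {V : Type*} (w : V → V → ℕ∞) (q : ℕ) : V ⊕ Bool → V ⊕ Bool → ℕ∞
  | Sum.inl u, Sum.inl v => w u v
  | Sum.inl _, Sum.inr _ => (q : ℕ∞)
  | Sum.inr _, Sum.inl _ => (q : ℕ∞)
  | Sum.inr _, Sum.inr _ => ⊤

/-!
Every vertex of `V` is at distance exactly `q` from the two new vertices `x` and `y`, which are
at distance `2q` from each other. A shortest walk between vertices of `V` either stays in `V` or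
passes through `x` or `y`, so in the augmented graph their distance is `min (dist u v) (2q)`.
Hence `ecc x = ecc y = 2q` and `ecc_{w_q} v = max q (min (ecc_w v) (2q))` for `v : V`, and the
latter equals `2q` exactly when `ecc_w v ≥ 2q`.
-/

open Sum

section Walks

variable {V : Type*} (w : V → V → ℕ∞)

lemma gdist_le_walkWeight {u v : V} (p : List V)
    (h : (u :: p).getLast (List.cons_ne_nil u p) = v) :
    gdist w u v ≤ walkWeight w u p :=
  iInf₂_le p h

lemma le_gdist {u v : V} {c : ℕ∞}
    (H : ∀ p, (u :: p).getLast (List.cons_ne_nil u p) = v → c ≤ walkWeight w u p) :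
    c ≤ gdist w u v :=
  le_iInf₂ H

lemma gdist_self (v : V) : gdist w v v = 0 :=
  nonpos_iff_eq_zero.mp (gdist_le_walkWeight w [] rfl)

lemma gdist_le_add_gdist (u x v : V) : gdist w u v ≤ w u x + gdist w x v := by
  simp only [gdist, ENat.add_iInf₂]
  refine le_iInf₂ fun p hp => gdist_le_walkWeight w (x :: p) ?_
  rwa [List.getLast_cons (List.cons_ne_nil x p)]

lemma le_walkWeight_of_le_edges_into {v : V} {c : ℕ∞} (hc : ∀ a, c ≤ w a v) :
    ∀ (p : List V) (u : V), p ≠ [] → (u :: p).getLast (List.cons_ne_nil u p) = v →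
      c ≤ walkWeight w u p
  | [], _, hp, _ => absurd rfl hp
  | [x], u, _, hlast => by
    obtain rfl : x = v := hlast
    exact le_add_right (hc u)
  | x :: y :: p, u, _, hlast =>
    le_add_left <| le_walkWeight_of_le_edges_into hc (y :: p) x (List.cons_ne_nil y p) hlast

end Walks

section Augmented

variable {V : Type*} (w : V → V → ℕ∞) (q : ℕ)

lemma walkWeight_aug_map_inl : ∀ (p : List V) (u : V),
    walkWeight (aug w q) (inl u) (p.map inl) = walkWeight w u p
  | [], _ => rfl
  | x :: p, u => congrArg (w u x + ·) (walkWeight_aug_map_inl p x)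

lemma le_aug_to_inr (a : V ⊕ Bool) (b : Bool) : (q : ℕ∞) ≤ aug w q a (inr b) := by
  cases a <;> simp [aug]

lemma le_aug_from_inr (b : Bool) (a : V ⊕ Bool) : (q : ℕ∞) ≤ aug w q (inr b) a := by
  cases a <;> simp [aug]

lemma le_walkWeight_aug_from_inr {b : Bool} {p : List (V ⊕ Bool)} (hp : p ≠ []) :
    (q : ℕ∞) ≤ walkWeight (aug w q) (inr b) p := by
  obtain ⟨c, cs, rfl⟩ := List.exists_cons_of_ne_nil hp
  exact le_add_right (le_aug_from_inr w q b c)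

lemma two_mul_le_gdist_aug_inr_inr {b b' : Bool} (hb : b ≠ b') :
    2 * (q : ℕ∞) ≤ gdist (aug w q) (inr b) (inr b' : V ⊕ Bool) := by
  refine le_gdist _ fun p hp => ?_
  obtain _ | ⟨c, cs⟩ := p
  · exact absurd (inr.inj hp) hb
  rw [List.getLast_cons (List.cons_ne_nil c cs)] at hp
  obtain x | b'' := c
  · have hcs : cs ≠ [] := by rintro rfl; cases hp
    rw [two_mul]
    exact add_le_add (le_aug_from_inr w q b _) <|
      le_walkWeight_of_le_edges_into _ (fun a => le_aug_to_inr w q a b') cs _ hcs hp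
  · simp [walkWeight, aug]

lemma min_gdist_le_walkWeight_aug : ∀ (p : List (V ⊕ Bool)) (u v : V),
    (inl u :: p).getLast (List.cons_ne_nil _ p) = inl v →
      min (gdist w u v) (2 * (q : ℕ∞)) ≤ walkWeight (aug w q) (inl u) p
  | [], u, v, hlast => by
    obtain rfl : u = v := inl.inj hlast
    simp [gdist_self]
  | inl x :: p, u, v, hlast => by
    have ih := min_gdist_le_walkWeight_aug p x v hlast
    calc min (gdist w u v) (2 * (q : ℕ∞))
        ≤ min (w u x + gdist w x v) (w u x + 2 * q) :=
          min_le_min (gdist_le_add_gdist w u x v) le_add_self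
      _ = w u x + min (gdist w x v) (2 * q) := (add_min _ _ _).symm
      _ ≤ w u x + walkWeight (aug w q) (inl x) p := add_le_add_right ih _
  | inr b :: p, u, v, hlast => by
    have hp : p ≠ [] := by rintro rfl; cases hlast
    calc min (gdist w u v) (2 * (q : ℕ∞)) ≤ q + q := (min_le_right _ _).trans (two_mul _).le
      _ ≤ walkWeight (aug w q) (inl u) (inr b :: p) :=
          add_le_add le_rfl (le_walkWeight_aug_from_inr w q hp)

lemma gdist_aug_inl_inl (u v : V) :
    gdist (aug w q) (inl u) (inl v) = min (gdist w u v) (2 * (q : ℕ∞)) := by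
  refine le_antisymm (le_min ?_ ?_) (le_gdist _ (min_gdist_le_walkWeight_aug w q · u v))
  · refine le_iInf₂ fun p hp => ?_
    rw [← walkWeight_aug_map_inl w q p u]
    refine gdist_le_walkWeight _ _ ?_
    rw [← hp, ← List.getLast_map (f := inl)]
    rfl
  · calc gdist (aug w q) (inl u) (inl v) ≤ walkWeight (aug w q) (inl u) [inr false, inl v] :=
          gdist_le_walkWeight _ _ rfl
      _ = 2 * (q : ℕ∞) := by simp [walkWeight, aug, two_mul]

lemma gdist_aug_inl_inr (u : V) (b : Bool) :
    gdist (aug w q) (inl u) (inr b) = (q : ℕ∞) := by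
  refine le_antisymm ?_ (le_gdist _ fun p hp => ?_)
  · calc gdist (aug w q) (inl u) (inr b) ≤ walkWeight (aug w q) (inl u) [inr b] :=
          gdist_le_walkWeight _ _ rfl
      _ = q := by simp [walkWeight, aug]
  · have hp' : p ≠ [] := by rintro rfl; cases hp
    exact le_walkWeight_of_le_edges_into _ (fun a => le_aug_to_inr w q a b) p _ hp' hp

lemma ecc_aug_inl (v : V) :
    ecc (aug w q) (inl v : V ⊕ Bool) = (q : ℕ∞) ⊔ (ecc w v ⊓ (2 * (q : ℕ∞))) := by
  simp only [ecc, iSup_sum, gdist_aug_inl_inl, gdist_aug_inl_inr, ciSup_const, ← iSup_inf_eq]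
  exact sup_comm _ _

lemma ecc_aug_inr [Nonempty V] (b : Bool) :
    ecc (aug w q) (inr b : V ⊕ Bool) = 2 * (q : ℕ∞) := by
  obtain ⟨v₀⟩ := ‹Nonempty V›
  refine le_antisymm (iSup_le fun t => ?_)
    ((two_mul_le_gdist_aug_inr_inr w q (Bool.not_ne_self b).symm).trans (le_iSup _ (inr !b)))
  cases t with
  | inl v =>
    calc gdist (aug w q) (inr b) (inl v) ≤ walkWeight (aug w q) (inr b) [inl v] :=
          gdist_le_walkWeight _ _ rfl
      _ ≤ 2 * (q : ℕ∞) := by simp [walkWeight, aug, two_mul]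
  | inr b' =>
    calc gdist (aug w q) (inr b) (inr b') ≤ walkWeight (aug w q) (inr b) [inl v₀, inr b'] :=
          gdist_le_walkWeight _ _ rfl
      _ = 2 * (q : ℕ∞) := by simp [walkWeight, aug, two_mul]

end Augmented

lemma ENat.sup_inf_two_mul_eq_two_mul_iff (q : ℕ) (e : ℕ∞) :
    (q : ℕ∞) ⊔ (e ⊓ 2 * q) = 2 * q ↔ 2 * (q : ℕ∞) ≤ e := by
  rcases Nat.eq_zero_or_pos q with rfl | hq
  · simp
  have hlt : (q : ℕ∞) < 2 * q := by exact_mod_cast (by omega : q < 2 * q)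
  constructor
  · intro h
    by_contra! he
    rw [inf_eq_left.mpr he.le] at h
    rcases le_total (q : ℕ∞) e with hqe | heq
    · exact he.ne (by rwa [sup_eq_right.mpr hqe] at h)
    · exact hlt.ne (by rwa [sup_eq_left.mpr heq] at h)
  · intro h
    rw [inf_eq_right.mpr h, sup_eq_right.mpr hlt.le]

theorem stmt4_general {V : Type*} [Nonempty V] (w : V → V → ℕ∞) (q : ℕ) :
    ((2 * q : ℕ) : ℕ∞) ≤ rad w ↔
      ∀ p : V ⊕ Bool, ecc (aug w q) p = ((2 * q : ℕ) : ℕ∞) := by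
  push_cast
  simp only [rad, le_iInf_iff, Sum.forall, ecc_aug_inl, ENat.sup_inf_two_mul_eq_two_mul_iff,
    ecc_aug_inr, implies_true, and_true]

theorem stmt4 {V : Type*} [Fintype V] [Nonempty V] (w : V → V → ℕ∞) (q : ℕ) (hq : 1 ≤ q) :
    ((2 * q : ℕ) : ℕ∞) ≤ rad w ↔
      ∀ p : V ⊕ Bool, ecc (aug w q) p = ((2 * q : ℕ) : ℕ∞) :=
  stmt4_general w q
end

section
/- Let V be a finite type, M ≥ 1 an integer, w : V → V → ℤ symmetric with |w u v| ≤ M for all u ≠ v, H = 10M, and let w₃ be the three-layer graph on V × Fin 3. Then for all distinct r, v : V, dist_{w₃}((r,0),(v,0)) = H/2 = 5M and dist_{w₃}((r,0),(v,1)) = H + w r v (all values positive integers viewed in ℕ∞). -/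
/-- Three-layer graph on `V × Fin 3` (parts A, B, C), with `H = 10 * M`:
within a layer, edges of weight `H / 2 = 5 * M` between distinct vertices;
forward edges (layer `i` to `i + 1`) of weight `H + w u v` for `u ≠ v` and `2 * H` for `u = v`;
backward edges (layer `i` to `i + 2`) of weight `2 * H - w u v` for `u ≠ v` and `H` for `u = v`. -/
def layer3 {V : Type*} [DecidableEq V] (w : V → V → ℤ) (M : ℤ) :
    V × Fin 3 → V × Fin 3 → ℕ∞ := fun p q =>
  if p.1 = q.1 then
    if q.2 = p.2 + 1 then ((20 * M).toNat : ℕ∞)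
    else if q.2 = p.2 + 2 then ((10 * M).toNat : ℕ∞)
    else ⊤
  else
    if q.2 = p.2 then ((5 * M).toNat : ℕ∞)
    else if q.2 = p.2 + 1 then ((10 * M + w p.1 q.1).toNat : ℕ∞)
    else if q.2 = p.2 + 2 then ((20 * M - w p.1 q.1).toNat : ℕ∞)
    else ⊤

/-!
Each upper bound is a single edge. For the lower bounds, a potential `D` with `D t = 0` and
`D a ≤ w a b + D b` on every edge bounds every walk into `t` from below by telescoping. Into
`(v, 0)` it suffices that every edge weighs at least `5 * M`. Into `(v, 1)`, any walk from `(r, 0)`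
other than the direct edge of weight `10 * M + w r v ≤ 11 * M` has at least two edges, weighing at
least `5 * M` each and at least `9 * M` when they change layer, hence weighs at least `14 * M`.
-/

section Potential

variable {V : Type*} (w : V → V → ℕ∞)

def IsPotential (t : V) (D : V → ℕ∞) : Prop :=
  D t = 0 ∧ ∀ a b, D a ≤ w a b + D b

variable {w}

theorem IsPotential.le_walkWeight {t : V} {D : V → ℕ∞} (hD : IsPotential w t D) :
    ∀ (p : List V) (u : V), (u :: p).getLast (List.cons_ne_nil u p) = t →
      D u ≤ walkWeight w u p
  | [], u, hu => by simp_all [walkWeight, hD.1]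
  | x :: xs, u, hu => by
    rw [List.getLast_cons (List.cons_ne_nil x xs)] at hu
    exact (hD.2 u x).trans (add_le_add_right (hD.le_walkWeight xs x hu) _)

theorem IsPotential.le_gdist {t : V} {D : V → ℕ∞} (hD : IsPotential w t D) (u : V) :
    D u ≤ gdist w u t :=
  le_iInf₂ fun p hp => hD.le_walkWeight p u hp

theorem isPotential_ite_of_le_weight [DecidableEq V] {c : ℕ∞} (hc : ∀ a b, c ≤ w a b)
    (t : V) : IsPotential w t fun p => if p = t then 0 else c := by
  refine ⟨if_pos rfl, fun a b => ?_⟩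
  dsimp only
  split_ifs with ha hb
  exacts [zero_le, zero_le, by simpa using hc a b, (hc a b).trans le_self_add]

theorem le_gdist_of_le_weight {c : ℕ∞} (hc : ∀ a b, c ≤ w a b) {u t : V} (hut : u ≠ t) :
    c ≤ gdist w u t := by
  classical
  simpa [hut] using (isPotential_ite_of_le_weight hc t).le_gdist u

theorem gdist_le_weight (u t : V) : gdist w u t ≤ w u t := by
  have : gdist w u t ≤ walkWeight w u [t] := iInf₂_le [t] (by simp)
  simpa [walkWeight] using this

end Potential

theorem natCast_toNat_le {a b : ℤ} (h : a ≤ b) : (a.toNat : ℕ∞) ≤ b.toNat :=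
  Nat.mono_cast (Int.toNat_le_toNat h)

theorem natCast_toNat_le_add {a b c : ℤ} (h : a ≤ b + c) :
    (a.toNat : ℕ∞) ≤ b.toNat + c.toNat := by
  rw [← Nat.cast_add, Nat.cast_le]; omega

section Layer3

variable {V : Type*} [DecidableEq V] {w : V → V → ℤ} {M : ℤ}

theorem layer3_same_layer {u v : V} (huv : u ≠ v) (i : Fin 3) :
    layer3 w M (u, i) (v, i) = ((5 * M).toNat : ℕ∞) := by
  simp [layer3, huv]

theorem layer3_next_layer {u v : V} (huv : u ≠ v) (i : Fin 3) :
    layer3 w M (u, i) (v, i + 1) = ((10 * M + w u v).toNat : ℕ∞) := by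
  simp [layer3, huv]

/-- At `(u, 0)`, `u ≠ v`, the weight of the direct edge to `(v, 1)`; elsewhere a lower bound by the
edges still needed: one edge (`5 * M`) from layer 1, a change of layer (`9 * M`) from the rest. -/
def layer3Potential (w : V → V → ℤ) (M : ℤ) (v : V) (p : V × Fin 3) : ℕ∞ :=
  if p = (v, 1) then 0
  else if p.2 = 1 then ((5 * M).toNat : ℕ∞)
  else if p.2 = 0 ∧ p.1 ≠ v then ((10 * M + w p.1 v).toNat : ℕ∞)
  else ((9 * M).toNat : ℕ∞)

theorem nine_mul_le_layer3 (hM : 0 ≤ M) (hw : ∀ u v, u ≠ v → |w u v| ≤ M)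
    {a b : V × Fin 3} (hab : a.2 ≠ b.2) :
    ((9 * M).toNat : ℕ∞) ≤ layer3 w M a b := by
  unfold layer3
  split_ifs with hv <;> try exact le_top
  · exact natCast_toNat_le (by linarith)
  · exact natCast_toNat_le (by linarith)
  · exact absurd ‹b.2 = a.2›.symm hab
  all_goals
    obtain ⟨hlo, hhi⟩ := abs_le.mp (hw a.1 b.1 hv)
    exact natCast_toNat_le (by linarith)

theorem five_mul_le_layer3 (hM : 0 ≤ M) (hw : ∀ u v, u ≠ v → |w u v| ≤ M)
    (a b : V × Fin 3) :
    ((5 * M).toNat : ℕ∞) ≤ layer3 w M a b := by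
  obtain ⟨u, i⟩ := a
  obtain ⟨v, j⟩ := b
  rcases eq_or_ne i j with rfl | hij
  · rcases eq_or_ne u v with rfl | huv
    · simp [layer3]
    · exact (layer3_same_layer huv i).ge
  · exact (natCast_toNat_le (by linarith)).trans (nine_mul_le_layer3 hM hw hij)

theorem nine_mul_le_layer3Potential (hw : ∀ u v, u ≠ v → |w u v| ≤ M)
    {v : V} {p : V × Fin 3} (hp : p.2 ≠ 1) :
    ((9 * M).toNat : ℕ∞) ≤ layer3Potential w M v p := by
  unfold layer3Potential
  split_ifs with hv h₀
  · exact absurd (congrArg Prod.snd hv) hp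
  · obtain ⟨lo, -⟩ := abs_le.mp (hw p.1 v h₀.2)
    exact natCast_toNat_le (by linarith)
  · exact le_rfl

theorem five_mul_le_layer3Potential (hM : 0 ≤ M) (hw : ∀ u v, u ≠ v → |w u v| ≤ M)
    {v : V} {p : V × Fin 3} (hp : p ≠ (v, 1)) :
    ((5 * M).toNat : ℕ∞) ≤ layer3Potential w M v p := by
  by_cases hp1 : p.2 = 1
  · simp [layer3Potential, hp, hp1]
  · exact (natCast_toNat_le (by linarith)).trans (nine_mul_le_layer3Potential hw hp1)

theorem isPotential_layer3Potential (hM : 0 ≤ M) (hw : ∀ u v, u ≠ v → |w u v| ≤ M)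
    (v : V) :
    IsPotential (layer3 w M) (v, 1) (layer3Potential w M v) := by
  refine ⟨if_pos rfl, fun ⟨u, i⟩ b => ?_⟩
  have h5 := five_mul_le_layer3 hM hw (u, i) b
  by_cases hi : i = 1
  · have ha : layer3Potential w M v (u, i) ≤ (5 * M).toNat := by
      unfold layer3Potential; split_ifs <;> simp
    exact ha.trans (h5.trans le_self_add)
  have ha : (u, i) ≠ (v, 1) := fun h => hi (congrArg Prod.snd h)
  by_cases hu : i = 0 ∧ u ≠ v
  · obtain ⟨rfl, huv⟩ := hu
    rw [layer3Potential, if_neg ha, if_neg hi, if_pos ⟨rfl, huv⟩]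
    obtain ⟨-, hhi⟩ := abs_le.mp (hw u v huv)
    rcases eq_or_ne b (v, 1) with rfl | hb
    · exact (layer3_next_layer huv 0).ge.trans le_self_add
    rcases eq_or_ne b.2 0 with hb0 | hb0
    · have hb9 := nine_mul_le_layer3Potential hw (v := v) (p := b) (by simp [hb0])
      exact (natCast_toNat_le_add (by linarith)).trans (add_le_add h5 hb9)
    · have h9 := nine_mul_le_layer3 hM hw (a := (u, 0)) (b := b) (Ne.symm hb0)
      exact (natCast_toNat_le_add (by linarith)).trans
        (add_le_add h9 (five_mul_le_layer3Potential hM hw hb))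
  · rw [layer3Potential, if_neg ha, if_neg hi, if_neg hu]
    rcases eq_or_ne b (v, 1) with rfl | hb
    · exact (nine_mul_le_layer3 hM hw hi).trans le_self_add
    · exact (natCast_toNat_le_add (by linarith)).trans
        (add_le_add h5 (five_mul_le_layer3Potential hM hw hb))

end Layer3

theorem stmt7_general {V : Type*} [DecidableEq V] (M : ℤ)
    (w : V → V → ℤ)
    (hbound : ∀ u v : V, u ≠ v → |w u v| ≤ M)
    (r v : V) (hrv : r ≠ v) :
    gdist (layer3 w M) (r, 0) (v, 0) = ((5 * M).toNat : ℕ∞) ∧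
    gdist (layer3 w M) (r, 0) (v, 1) = ((10 * M + w r v).toNat : ℕ∞) := by
  have hM : 0 ≤ M := (abs_nonneg _).trans (hbound r v hrv)
  constructor
  · refine le_antisymm ((gdist_le_weight _ _).trans_eq (layer3_same_layer hrv 0)) ?_
    exact le_gdist_of_le_weight (five_mul_le_layer3 hM hbound) (by simp [hrv])
  · refine le_antisymm ((gdist_le_weight _ _).trans_eq (layer3_next_layer hrv 0)) ?_
    simpa [layer3Potential, hrv] using (isPotential_layer3Potential hM hbound v).le_gdist (r, 0)

theorem stmt7 {V : Type*} [Fintype V] [DecidableEq V] (M : ℤ) (hM : 1 ≤ M)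
    (w : V → V → ℤ) (hsymm : ∀ u v : V, w u v = w v u)
    (hbound : ∀ u v : V, u ≠ v → |w u v| ≤ M)
    (r v : V) (hrv : r ≠ v) :
    gdist (layer3 w M) (r, 0) (v, 0) = ((5 * M).toNat : ℕ∞) ∧
    gdist (layer3 w M) (r, 0) (v, 1) = ((10 * M + w r v).toNat : ℕ∞) :=
  stmt7_general M w hbound r v hrv
end
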